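/- For every positive integer n and every k ≥ 1, the identity k · s(n,k) = Σ_{i=k-1}^{n-1} C(n,i) · (n-i-1)! · s(i,k-1) holds, where s denotes the unsigned Stirling numbers of the first kind. -/

import Mathlib

open Nat

/-- Unsigned Stirling numbers of the first kind: `stirling1 n k` is the number
of permutations of `n` elements with exactly `k` cycles, so that
`x(x+1)⋯(x+n-1) = Σ_k stirling1 n k * x^k`. -/
def stirling1 : ℕ → ℕ → ℕ
  | 0, 0 => 1
  | 0, _ + 1 => 0
  | _ + 1, 0 => 0
  | n + 1, k + 1 => n * stirling1 n (k + 1) + stirling1 n k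

lemma stirling1_succ (n k : ℕ) :
    stirling1 (n+1) (k+1) = n * stirling1 n (k+1) + stirling1 n k := rfl

lemma stirling1_zero_right (n : ℕ) : stirling1 (n+1) 0 = 0 := rfl

lemma stirling1_eq_zero_of_lt : ∀ n k : ℕ, n < k → stirling1 n k = 0 := by
  intro n
  induction n with
  | zero =>
    intro k h
    match k, h with
    | k + 1, _ => rfl
  | succ n ih =>
    intro k h
    match k, h with
    | k + 1, h =>
      rw [stirling1_succ, ih (k+1) (by omega), ih k (by omega)]
      simp

lemma stirling1_one_right : ∀ n : ℕ, stirling1 (n+1) 1 = n ! := by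
  intro n
  induction n with
  | zero => rfl
  | succ n ih =>
    rw [stirling1_succ, ih, stirling1_zero_right, factorial_succ]
    ring

lemma sum_Icc_shift (a b : ℕ) (f : ℕ → ℕ) :
    ∑ i ∈ Finset.Icc (a+1) (b+1), f i = ∑ j ∈ Finset.Icc a b, f (j+1) := by
  rw [← Finset.map_add_right_Icc, Finset.sum_map]
  rfl

lemma stirling1_aux (N : ℕ) : ∀ K : ℕ, (K+1) * stirling1 (N+1) (K+1) =
    ∑ i ∈ Finset.Icc K N, (N+1).choose i * (N - i)! * stirling1 i K := by
  induction N with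
  | zero =>
    intro K
    match K with
    | 0 => simp [stirling1]
    | K + 1 =>
      rw [Finset.Icc_eq_empty (by omega)]
      rw [stirling1_succ, stirling1_eq_zero_of_lt 0 (K+2) (by omega),
        stirling1_eq_zero_of_lt 0 (K+1) (by omega)]
      simp
  | succ N ih =>
    intro K
    match K with
    | 0 =>
      simp only [Nat.zero_add]
      rw [one_mul, stirling1_one_right]
      rw [Finset.sum_eq_single_of_mem 0 (by simp)]
      · simp [stirling1]
      · intro b hb hb0
        match b, hb0 with
        | b + 1, _ => rw [stirling1_zero_right]; ring
    | κ + 1 =>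
      by_cases hκ : κ ≤ N
      · -- Expand RHS by shifting index and applying recurrences
        have hsum1 : ∑ i ∈ Finset.Icc (κ+1) (N+1),
              (N+1+1).choose i * (N + 1 - i)! * stirling1 i (κ+1)
            = (∑ j ∈ Finset.Icc κ N,
                j * ((N+1).choose j * (N-j)! * stirling1 j (κ+1)))
              + (∑ j ∈ Finset.Icc κ N,
                (N+1).choose j * (N-j)! * stirling1 j κ)
              + (∑ j ∈ Finset.Icc κ N,
                (N+1).choose (j+1) * (N-j)! * stirling1 (j+1) (κ+1)) := by
          rw [sum_Icc_shift, ← Finset.sum_add_distrib, ← Finset.sum_add_distrib]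
          refine Finset.sum_congr rfl ?_
          intro j hj
          have h1 : N + 1 - (j+1) = N - j := by omega
          rw [h1, Nat.choose_succ_succ]
          rw [stirling1_succ j κ]
          ring
        -- third sum: shift back and split off top
        have hsum3 : ∑ j ∈ Finset.Icc κ N,
              (N+1).choose (j+1) * (N-j)! * stirling1 (j+1) (κ+1)
            = (∑ i ∈ Finset.Icc (κ+1) N,
                (N + 1 - i) * ((N+1).choose i * (N-i)! * stirling1 i (κ+1)))
              + stirling1 (N+1) (κ+1) := by
          have : ∑ j ∈ Finset.Icc κ N,
                (N+1).choose (j+1) * (N-j)! * stirling1 (j+1) (κ+1)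
              = ∑ i ∈ Finset.Icc (κ+1) (N+1),
                (N+1).choose i * (N + 1 - i)! * stirling1 i (κ+1) := by
            rw [sum_Icc_shift]
            refine Finset.sum_congr rfl ?_
            intro j hj
            have h1 : N + 1 - (j+1) = N - j := by omega
            rw [h1]
          rw [this, Finset.sum_Icc_succ_top (by omega)]
          simp only [Nat.choose_self, Nat.sub_self, Nat.factorial_zero, one_mul, mul_one]
          congr 1
          refine Finset.sum_congr rfl ?_
          intro i hi
          simp only [Finset.mem_Icc] at hi
          have h2 : N + 1 - i = (N - i) + 1 := by omega
          rw [h2, factorial_succ]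
          ring
        -- first sum: bottom term vanishes
        have hsum1' : ∑ j ∈ Finset.Icc κ N,
              j * ((N+1).choose j * (N-j)! * stirling1 j (κ+1))
            = ∑ j ∈ Finset.Icc (κ+1) N,
              j * ((N+1).choose j * (N-j)! * stirling1 j (κ+1)) := by
          refine (Finset.sum_subset (Finset.Icc_subset_Icc_left (by omega)) ?_).symm
          intro x hx hx'
          simp only [Finset.mem_Icc] at hx hx'
          have hxκ : x = κ := by omega
          rw [hxκ, stirling1_eq_zero_of_lt κ (κ+1) (by omega)]
          ring
        -- combine first and third sums
        have hcomb : (∑ j ∈ Finset.Icc (κ+1) N,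
              j * ((N+1).choose j * (N-j)! * stirling1 j (κ+1)))
            + (∑ i ∈ Finset.Icc (κ+1) N,
              (N + 1 - i) * ((N+1).choose i * (N-i)! * stirling1 i (κ+1)))
            = (N+1) * ∑ i ∈ Finset.Icc (κ+1) N,
                (N+1).choose i * (N-i)! * stirling1 i (κ+1) := by
          rw [← Finset.sum_add_distrib, Finset.mul_sum]
          refine Finset.sum_congr rfl ?_
          intro i hi
          simp only [Finset.mem_Icc] at hi
          have h3 : i + (N + 1 - i) = N + 1 := by omega
          rw [← add_mul, h3]
        have A := ih (κ+1)
        have B := ih κ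
        calc (κ+1+1) * stirling1 (N+1+1) (κ+1+1)
            = (N+1) * ((κ+1+1) * stirling1 (N+1) (κ+1+1))
              + ((κ+1) * stirling1 (N+1) (κ+1)) + stirling1 (N+1) (κ+1) := by
              rw [stirling1_succ (N+1) (κ+1)]; ring
          _ = (N+1) * (∑ i ∈ Finset.Icc (κ+1) N,
                (N+1).choose i * (N-i)! * stirling1 i (κ+1))
              + (∑ j ∈ Finset.Icc κ N,
                (N+1).choose j * (N-j)! * stirling1 j κ)
              + stirling1 (N+1) (κ+1) := by rw [A, B]
          _ = ∑ i ∈ Finset.Icc (κ+1) (N+1),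
                (N+1+1).choose i * (N + 1 - i)! * stirling1 i (κ+1) := by
              rw [hsum1, hsum1', hsum3, ← hcomb]; ring
      · rw [Finset.Icc_eq_empty (by omega), Finset.sum_empty,
          stirling1_eq_zero_of_lt (N+1+1) (κ+1+1) (by omega)]
        ring

/-- For `n ≥ 1` and `k ≥ 1`,
`k · s(n,k) = Σ_{i=k-1}^{n-1} C(n,i) · (n-i-1)! · s(i,k-1)`. -/
theorem mul_stirling1_recurrence (n k : ℕ) (hn : 0 < n) (hk : 1 ≤ k) :
    k * stirling1 n k =
      ∑ i ∈ Finset.Icc (k - 1) (n - 1), n.choose i * (n - i - 1)! * stirling1 i (k - 1) := by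
  match n, k, hn, hk with
  | N + 1, K + 1, _, _ =>
    simp only [Nat.add_sub_cancel]
    rw [stirling1_aux N K]
    refine Finset.sum_congr rfl ?_
    intro i hi
    have : N + 1 - i - 1 = N - i := by omega
    rw [this]
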